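/- Let H be a group with finite symmetric generating set S whose word metric is δ-hyperbolic, let K ≥ 1, C ≥ 0, and let ψ : H → H be a group automorphism that is a (K,C)-quasi-isometry with respect to the word metric, i.e. (1/K)·d(a,b) − C ≤ d(ψ(a),ψ(b)) ≤ K·d(a,b) + C for all a,b ∈ H. Then for any κ ≥ 0 there exists κ' ≥ 0, depending only on K, C, κ, H, S and δ, such that for every h ∈ H, if h is κ-almost conjugacy minimal then ψ(h) is κ'-almost conjugacy minimal. -/

import Mathlib

/-!
In a hyperbolic group, `h` is almost conjugacy minimal exactly when the Gromov product
`(h⁻¹,h)_1` is bounded. If it is large, conjugating `h` by a point of a geodesic `[1,h]` shortens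
it. If it is small, the four point condition makes `|hⁿ|` grow at rate `|h| - 2 (h⁻¹,h)_1 - O(δ)`,
while `|hⁿ| ≤ 2 |g| + n |g⁻¹ h g|`; this bounds every conjugate of `h` from below.
A quasi-isometric automorphism `ψ` fixes `1` and maps a geodesic `[h⁻¹,h]` passing near `1` to a
quasi-geodesic, which by stability of quasi-geodesics stays uniformly close to any geodesic
`[ψ h⁻¹, ψ h]`; so `(ψ h⁻¹, ψ h)_1` stays bounded as well.
-/

open Set

/-- The word length of `h` with respect to the generating set `S`: the least `n` such
that `h` is a product of `n` elements of `S`. -/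
noncomputable def wordLength {H : Type*} [Group H] (S : Set H) (h : H) : ℕ :=
  sInf {n | ∃ l : List H, l.length = n ∧ (∀ x ∈ l, x ∈ S) ∧ l.prod = h}

/-- The word metric: `d(a,b) = |a⁻¹ b|`. -/
noncomputable def wordDist {H : Type*} [Group H] (S : Set H) (a b : H) : ℕ :=
  wordLength S (a⁻¹ * b)

/-- `g : {0,…,n} → H` is a discrete geodesic (of length `n`) in the word metric:
`d(g i, g j) = |i − j|` for all `i, j ≤ n`. -/
def IsDiscreteGeodesic {H : Type*} [Group H] (S : Set H) (g : ℕ → H) (n : ℕ) : Prop :=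
  ∀ i j : ℕ, i ≤ j → j ≤ n → wordDist S (g i) (g j) = j - i

/-- The Gromov product `(x,y)_z = ½(d(x,z) + d(y,z) − d(x,y))` in the word metric. -/
noncomputable def gromovProd {H : Type*} [Group H] (S : Set H) (x y z : H) : ℝ :=
  ((wordDist S x z : ℝ) + (wordDist S y z : ℝ) - (wordDist S x y : ℝ)) / 2

/-- The word metric of `(H,S)` is `δ`-hyperbolic: geodesic triangles in the Cayley graph
are `δ`-thin, i.e. for any `x, y, z`, any discrete geodesics `f` from `z` to `x` and `g`
from `z` to `y`, and any `i` with `i ≤ (x,y)_z`, one has `d(f i, g i) ≤ δ`. -/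
def WordHyperbolic {H : Type*} [Group H] (S : Set H) (δ : ℝ) : Prop :=
  ∀ (x y z : H) (f g : ℕ → H),
    f 0 = z → f (wordDist S z x) = x → IsDiscreteGeodesic S f (wordDist S z x) →
    g 0 = z → g (wordDist S z y) = y → IsDiscreteGeodesic S g (wordDist S z y) →
    ∀ i : ℕ, i ≤ wordDist S z x → i ≤ wordDist S z y →
      (i : ℝ) ≤ gromovProd S x y z →
      (wordDist S (f i) (g i) : ℝ) ≤ δ

/-- `h` is `κ`-almost conjugacy minimal: `|h| ≤ |h'| + κ` for every conjugate `h'` of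
`h` in `H`. -/
def AlmostConjMin {H : Type*} [Group H] (S : Set H) (κ : ℝ) (h : H) : Prop :=
  ∀ g : H, (wordLength S h : ℝ) ≤ (wordLength S (g⁻¹ * h * g) : ℝ) + κ

/-- `h` is conjugacy minimal: `|h| ≤ |h'|` for every conjugate `h'` of `h` in `H`. -/
def ConjMin {H : Type*} [Group H] (S : Set H) (h : H) : Prop :=
  ∀ g : H, wordLength S h ≤ wordLength S (g⁻¹ * h * g)

section

variable {H : Type*} [Group H] {S : Set H}

structure IsSymmetricGeneratingSet (S : Set H) : Prop where
  inv_mem : ∀ s ∈ S, s⁻¹ ∈ S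
  exists_list_prod : ∀ h : H, ∃ l : List H, (∀ x ∈ l, x ∈ S) ∧ l.prod = h

theorem IsSymmetricGeneratingSet.of_closure_eq_top (hSsym : ∀ s ∈ S, s⁻¹ ∈ S)
    (hSgen : Subgroup.closure S = ⊤) : IsSymmetricGeneratingSet S := by
  refine ⟨hSsym, fun h => Submonoid.exists_list_of_mem_closure ?_⟩
  have hinv : S⁻¹ ⊆ S := fun x hx => by simpa using hSsym x⁻¹ hx
  rw [← Set.union_eq_self_of_subset_right hinv, ← Subgroup.closure_toSubmonoid, hSgen]
  trivial

theorem wordLength_le_length {h : H} (l : List H) (hl : ∀ x ∈ l, x ∈ S) (hp : l.prod = h) :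
    wordLength S h ≤ l.length :=
  Nat.sInf_le ⟨l, rfl, hl, hp⟩

@[simp]
theorem wordLength_one : wordLength S (1 : H) = 0 :=
  Nat.le_zero.mp (wordLength_le_length [] (by simp) rfl)

@[simp]
theorem wordDist_self (a : H) : wordDist S a a = 0 := by
  simp [wordDist]

theorem wordDist_one_left (x : H) : wordDist S 1 x = wordLength S x := by
  simp [wordDist]

theorem wordDist_mul_left (g a b : H) : wordDist S (g * a) (g * b) = wordDist S a b := by
  simp [wordDist, mul_assoc]

theorem wordDist_self_mul (a s : H) : wordDist S a (a * s) = wordLength S s := by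
  simp [wordDist]

namespace IsSymmetricGeneratingSet

theorem exists_list_length_eq_wordLength (hS : IsSymmetricGeneratingSet S) (h : H) :
    ∃ l : List H, l.length = wordLength S h ∧ (∀ x ∈ l, x ∈ S) ∧ l.prod = h :=
  Nat.sInf_mem (s := {n | ∃ l : List H, l.length = n ∧ (∀ x ∈ l, x ∈ S) ∧ l.prod = h})
    (let ⟨l, hl, hp⟩ := hS.exists_list_prod h; ⟨_, l, rfl, hl, hp⟩)

theorem wordLength_inv_le (hS : IsSymmetricGeneratingSet S) (h : H) :
    wordLength S h⁻¹ ≤ wordLength S h := by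
  obtain ⟨l, hlen, hl, rfl⟩ := hS.exists_list_length_eq_wordLength h
  refine (wordLength_le_length (l.map (·⁻¹)).reverse ?_ (List.prod_inv_reverse l).symm).trans ?_
  · simp only [List.mem_reverse, List.mem_map]
    rintro _ ⟨y, hy, rfl⟩
    exact hS.inv_mem y (hl y hy)
  · simp [hlen]

@[simp]
theorem wordLength_inv (hS : IsSymmetricGeneratingSet S) (h : H) :
    wordLength S h⁻¹ = wordLength S h :=
  (hS.wordLength_inv_le h).antisymm (by simpa using hS.wordLength_inv_le h⁻¹)

theorem wordLength_mul_le (hS : IsSymmetricGeneratingSet S) (a b : H) :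
    wordLength S (a * b) ≤ wordLength S a + wordLength S b := by
  obtain ⟨la, hla, hl1, rfl⟩ := hS.exists_list_length_eq_wordLength a
  obtain ⟨lb, hlb, hl2, rfl⟩ := hS.exists_list_length_eq_wordLength b
  refine (wordLength_le_length (la ++ lb) ?_ (List.prod_append ..)).trans ?_
  · intro x hx
    exact (List.mem_append.mp hx).elim (hl1 x) (hl2 x)
  · simp [hla, hlb]

theorem wordLength_pow_le (hS : IsSymmetricGeneratingSet S) (b : H) (n : ℕ) :
    wordLength S (b ^ n) ≤ n * wordLength S b := by
  induction n with
  | zero => simp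
  | succ m ih =>
    rw [pow_succ, add_mul, one_mul]
    exact (hS.wordLength_mul_le _ _).trans (Nat.add_le_add_right ih _)

theorem wordDist_comm (hS : IsSymmetricGeneratingSet S) (a b : H) :
    wordDist S a b = wordDist S b a := by
  rw [wordDist, ← hS.wordLength_inv, mul_inv_rev, inv_inv, wordDist]

theorem wordDist_triangle (hS : IsSymmetricGeneratingSet S) (a b c : H) :
    wordDist S a c ≤ wordDist S a b + wordDist S b c := by
  have : a⁻¹ * c = (a⁻¹ * b) * (b⁻¹ * c) := by group
  rw [wordDist, this]
  exact hS.wordLength_mul_le _ _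

theorem wordDist_triangle_real (hS : IsSymmetricGeneratingSet S) (a b c : H) :
    (wordDist S a c : ℝ) ≤ wordDist S a b + wordDist S b c := by
  exact_mod_cast hS.wordDist_triangle a b c

end IsSymmetricGeneratingSet

structure IsGeodesicSegment (S : Set H) (f : ℕ → H) (x y : H) : Prop where
  zero : f 0 = x
  last : f (wordDist S x y) = y
  isDiscreteGeodesic : IsDiscreteGeodesic S f (wordDist S x y)

def IsCoarsePath (S : Set H) (B : ℝ) (z : ℕ → H) (N : ℕ) : Prop :=
  ∀ j < N, (wordDist S (z j) (z (j + 1)) : ℝ) ≤ B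

theorem IsCoarsePath.of_le {B : ℝ} {z : ℕ → H} {N M : ℕ} (hz : IsCoarsePath S B z N) (hM : M ≤ N) :
    IsCoarsePath S B z M :=
  fun j hj => hz j (by omega)

theorem IsCoarsePath.shift {B : ℝ} {z : ℕ → H} {N : ℕ} (hz : IsCoarsePath S B z N) (a : ℕ) :
    IsCoarsePath S B (fun j => z (a + j)) (N - a) :=
  fun j hj => hz (a + j) (by omega)

namespace IsSymmetricGeneratingSet

variable (hS : IsSymmetricGeneratingSet S)
include hS

theorem wordDist_le_sub_of_isCoarsePath {z : ℕ → H} {N : ℕ} (hz : IsCoarsePath S 1 z N) {i j : ℕ}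
    (hij : i ≤ j) (hj : j ≤ N) : wordDist S (z i) (z j) ≤ j - i := by
  induction j, hij using Nat.le_induction with
  | base => simp
  | succ j hij ih =>
    have hstep : wordDist S (z j) (z (j + 1)) ≤ 1 := by exact_mod_cast hz j (by omega)
    have := hS.wordDist_triangle (z i) (z j) (z (j + 1))
    have := ih (by omega)
    omega

theorem isGeodesicSegment_of_isCoarsePath {f : ℕ → H} {x y : H} (hf0 : f 0 = x)
    (hfn : f (wordDist S x y) = y) (hf : IsCoarsePath S 1 f (wordDist S x y)) :
    IsGeodesicSegment S f x y := by
  refine ⟨hf0, hfn, fun i j hij hjn =>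
    le_antisymm (hS.wordDist_le_sub_of_isCoarsePath hf hij hjn) ?_⟩
  have h1 := hS.wordDist_le_sub_of_isCoarsePath hf (Nat.zero_le i) (hij.trans hjn)
  have h2 := hS.wordDist_le_sub_of_isCoarsePath hf hjn le_rfl
  have h3 := hS.wordDist_triangle (f 0) (f i) (f (wordDist S x y))
  have h4 := hS.wordDist_triangle (f i) (f j) (f (wordDist S x y))
  rw [hf0, hfn] at *
  omega

theorem exists_isGeodesicSegment (x y : H) : ∃ f, IsGeodesicSegment S f x y := by
  obtain ⟨l, hlen, hl, hp⟩ := hS.exists_list_length_eq_wordLength (x⁻¹ * y)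
  refine ⟨fun i => x * (l.take i).prod, hS.isGeodesicSegment_of_isCoarsePath (by simp) ?_ ?_⟩
  · rw [List.take_of_length_le (by rw [hlen]; rfl), hp, mul_inv_cancel_left]
  · intro i hi
    have hi' : i < l.length := by rw [hlen]; exact hi
    dsimp only
    rw [List.prod_take_succ l i hi', ← mul_assoc, wordDist_self_mul]
    exact_mod_cast wordLength_le_length [l[i]] (by simpa using hl _ (List.getElem_mem _)) (by simp)

end IsSymmetricGeneratingSet

namespace IsGeodesicSegment

variable {f : ℕ → H} {x y : H}

theorem isCoarsePath (hf : IsGeodesicSegment S f x y) {B : ℝ} (hB : 1 ≤ B) :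
    IsCoarsePath S B f (wordDist S x y) := fun j hj => by
  rw [hf.isDiscreteGeodesic j (j + 1) (by omega) hj]
  simpa using hB

theorem wordDist_left (hf : IsGeodesicSegment S f x y) {i : ℕ} (hi : i ≤ wordDist S x y) :
    wordDist S x (f i) = i := by
  simpa [hf.zero] using hf.isDiscreteGeodesic 0 i (Nat.zero_le i) hi

theorem wordDist_right (hf : IsGeodesicSegment S f x y) {i : ℕ} (hi : i ≤ wordDist S x y) :
    wordDist S (f i) y = wordDist S x y - i := by
  simpa [hf.last] using hf.isDiscreteGeodesic i _ hi le_rfl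

theorem reverse (hf : IsGeodesicSegment S f x y) (hS : IsSymmetricGeneratingSet S) :
    IsGeodesicSegment S (fun i => f (wordDist S x y - i)) y x := by
  have hyx := hS.wordDist_comm y x
  refine ⟨by simpa using hf.last, by simpa [hyx] using hf.zero, fun i j hij hjn => ?_⟩
  rw [hyx] at hjn
  rw [hS.wordDist_comm, hf.isDiscreteGeodesic _ _ (by omega) (by omega)]
  omega

theorem mul_left (hf : IsGeodesicSegment S f x y) (g : H) :
    IsGeodesicSegment S (fun i => g * f i) (g * x) (g * y) where
  zero := by simp [hf.zero]
  last := by simp [wordDist_mul_left, hf.last]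
  isDiscreteGeodesic i j hij hjn := by
    rw [wordDist_mul_left] at hjn ⊢
    exact hf.isDiscreteGeodesic i j hij hjn

theorem shift (hf : IsGeodesicSegment S f x y) {a b : ℕ} (hab : a ≤ b)
    (hb : b ≤ wordDist S x y) : IsGeodesicSegment S (fun j => f (a + j)) (f a) (f b) := by
  have hd : wordDist S (f a) (f b) = b - a := hf.isDiscreteGeodesic a b hab hb
  refine ⟨by simp, by rw [hd]; congr 1; omega, fun i j hij hjn => ?_⟩
  rw [hd] at hjn
  rw [hf.isDiscreteGeodesic _ _ (by omega) (by omega)]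
  omega

end IsGeodesicSegment

def pathConcat {α : Type*} (u : ℕ → α) (A : ℕ) (v : ℕ → α) : ℕ → α :=
  fun j => if j ≤ A then u j else v (j - A)

section pathConcat

variable {α : Type*} {u v : ℕ → α} {A : ℕ}

@[simp]
theorem pathConcat_zero : pathConcat u A v 0 = u 0 := by
  simp [pathConcat]

theorem pathConcat_add (huv : u A = v 0) (L : ℕ) : pathConcat u A v (A + L) = v L := by
  rcases Nat.eq_zero_or_pos L with rfl | hL
  · simp [pathConcat, huv]
  · simp [pathConcat, show ¬A + L ≤ A by omega]

theorem forall_pathConcat {P : α → Prop} {L : ℕ} (hu : ∀ j ≤ A, P (u j)) (hv : ∀ j ≤ L, P (v j))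
    {j : ℕ} (hj : j ≤ A + L) : P (pathConcat u A v j) := by
  unfold pathConcat
  split_ifs with h
  · exact hu j h
  · exact hv (j - A) (by omega)

end pathConcat

theorem IsCoarsePath.pathConcat {B : ℝ} {u v : ℕ → H} {A L : ℕ} (hu : IsCoarsePath S B u A)
    (hv : IsCoarsePath S B v L) (huv : u A = v 0) :
    IsCoarsePath S B (pathConcat u A v) (A + L) := by
  intro j hj
  unfold _root_.pathConcat
  rcases lt_trichotomy j A with h | rfl | h
  · rw [if_pos h.le, if_pos (by omega)]
    exact hu j h
  · rw [if_pos le_rfl, if_neg (by omega), Nat.add_sub_cancel_left, huv]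
    exact hv 0 (by omega)
  · rw [if_neg (by omega), if_neg (by omega), show j + 1 - A = j - A + 1 by omega]
    exact hv (j - A) (by omega)

theorem IsCoarsePath.reverse (hS : IsSymmetricGeneratingSet S) {B : ℝ} {z : ℕ → H} {N : ℕ}
    (hz : IsCoarsePath S B z N) : IsCoarsePath S B (fun j => z (N - j)) N := by
  intro j hj
  dsimp only
  rw [hS.wordDist_comm, show N - j = N - (j + 1) + 1 by omega]
  exact hz _ (by omega)

theorem gromovProd_mul_left (g x y z : H) :
    gromovProd S (g * x) (g * y) (g * z) = gromovProd S x y z := by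
  simp only [gromovProd, wordDist_mul_left]

namespace IsSymmetricGeneratingSet

variable (hS : IsSymmetricGeneratingSet S)
include hS

theorem wordDist_comm_real (a b : H) : (wordDist S a b : ℝ) = wordDist S b a := by
  rw [hS.wordDist_comm]

theorem gromovProd_comm (x y z : H) : gromovProd S x y z = gromovProd S y x z := by
  simp only [gromovProd, hS.wordDist_comm_real x y]
  ring

theorem gromovProd_nonneg (x y z : H) : 0 ≤ gromovProd S x y z := by
  have := hS.wordDist_triangle_real x z y
  have := hS.wordDist_comm_real z y
  unfold gromovProd
  linarith

theorem gromovProd_le_left (x y z : H) : gromovProd S x y z ≤ wordDist S z x := by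
  have := hS.wordDist_triangle_real y x z
  have := hS.wordDist_comm_real y x
  have := hS.wordDist_comm_real x z
  unfold gromovProd
  linarith

theorem gromovProd_le_right (x y z : H) : gromovProd S x y z ≤ wordDist S z y := by
  rw [hS.gromovProd_comm]
  exact hS.gromovProd_le_left y x z

theorem gromovProd_add_gromovProd (x y w : H) :
    gromovProd S y w x + gromovProd S x w y = wordDist S x y := by
  have := hS.wordDist_comm_real y x
  have := hS.wordDist_comm_real w x
  have := hS.wordDist_comm_real w y
  unfold gromovProd
  linarith

theorem gromovProd_le_wordDist_add (x y z w : H) :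
    gromovProd S x y z ≤ wordDist S z w + gromovProd S x y w := by
  have := hS.wordDist_triangle_real x w z
  have := hS.wordDist_triangle_real y w z
  have := hS.wordDist_comm_real w z
  unfold gromovProd
  linarith

end IsSymmetricGeneratingSet

theorem IsGeodesicSegment.gromovProd_le_wordDist {f : ℕ → H} {x y : H}
    (hf : IsGeodesicSegment S f x y) (hS : IsSymmetricGeneratingSet S) (z : H) {i : ℕ}
    (hi : i ≤ wordDist S x y) : gromovProd S x y z ≤ wordDist S z (f i) := by
  have hgp := hS.gromovProd_le_wordDist_add x y z (f i)
  have hx : (wordDist S x (f i) : ℝ) = i := by rw [hf.wordDist_left hi]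
  have hy : (wordDist S y (f i) : ℝ) = wordDist S x y - i := by
    rw [hS.wordDist_comm, hf.wordDist_right hi, Nat.cast_sub hi]
  have : gromovProd S x y (f i) = 0 := by
    unfold gromovProd
    rw [hx, hy]
    ring
  linarith

namespace WordHyperbolic

variable {δ : ℝ} (hhyp : WordHyperbolic S δ) (hS : IsSymmetricGeneratingSet S)
include hhyp hS

theorem wordDist_le_of_le_gromovProd {f g : ℕ → H} {x y z : H} (hf : IsGeodesicSegment S f z x)
    (hg : IsGeodesicSegment S g z y) {i : ℕ} (hi : (i : ℝ) ≤ gromovProd S x y z) :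
    (wordDist S (f i) (g i) : ℝ) ≤ δ := by
  have hix : (i : ℝ) ≤ wordDist S z x := hi.trans (hS.gromovProd_le_left x y z)
  have hiy : (i : ℝ) ≤ wordDist S z y := hi.trans (hS.gromovProd_le_right x y z)
  exact hhyp x y z f g hf.zero hf.last hf.isDiscreteGeodesic hg.zero hg.last
    hg.isDiscreteGeodesic i (by exact_mod_cast hix) (by exact_mod_cast hiy) hi

theorem nonneg : 0 ≤ δ := by
  obtain ⟨f, hf⟩ := hS.exists_isGeodesicSegment (1 : H) 1
  simpa using hhyp.wordDist_le_of_le_gromovProd hS hf hf (i := 0)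
    (by simpa using hS.gromovProd_nonneg 1 1 1)

theorem exists_wordDist_le_gromovProd {g : ℕ → H} {x y : H} (hg : IsGeodesicSegment S g x y)
    (z : H) : ∃ i ≤ wordDist S x y, (wordDist S z (g i) : ℝ) ≤ gromovProd S x y z + δ + 1 := by
  obtain ⟨f, hf⟩ := hS.exists_isGeodesicSegment x z
  set t := gromovProd S y z x
  have ht : 0 ≤ t := hS.gromovProd_nonneg y z x
  have hty : t ≤ wordDist S x y := hS.gromovProd_le_left y z x
  have htz : t ≤ wordDist S x z := hS.gromovProd_le_right y z x
  have hiy : ⌊t⌋₊ ≤ wordDist S x y := by exact_mod_cast (Nat.floor_le ht).trans hty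
  have hiz : ⌊t⌋₊ ≤ wordDist S x z := by exact_mod_cast (Nat.floor_le ht).trans htz
  refine ⟨⌊t⌋₊, hiy, ?_⟩
  have hthin := hhyp.wordDist_le_of_le_gromovProd hS hg hf (Nat.floor_le ht)
  have hfz : (wordDist S z (f ⌊t⌋₊) : ℝ) = wordDist S x z - ⌊t⌋₊ := by
    rw [hS.wordDist_comm, hf.wordDist_right hiz, Nat.cast_sub hiz]
  have hsum := hS.gromovProd_add_gromovProd x z y
  rw [hS.gromovProd_comm z y x] at hsum
  have := hS.wordDist_triangle_real z (f ⌊t⌋₊) (g ⌊t⌋₊)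
  have := hS.wordDist_comm_real (f ⌊t⌋₊) (g ⌊t⌋₊)
  have := Nat.lt_floor_add_one t
  linarith

theorem min_gromovProd_le (w x y z : H) :
    min (gromovProd S x z w) (gromovProd S z y w) - (δ + 1) ≤ gromovProd S x y w := by
  obtain ⟨α, hα⟩ := hS.exists_isGeodesicSegment w x
  obtain ⟨β, hβ⟩ := hS.exists_isGeodesicSegment w y
  obtain ⟨γ, hγ⟩ := hS.exists_isGeodesicSegment w z
  set t := min (gromovProd S x z w) (gromovProd S z y w)
  have ht : 0 ≤ t := le_min (hS.gromovProd_nonneg x z w) (hS.gromovProd_nonneg z y w)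
  set i := ⌊t⌋₊
  have hi1 : (i : ℝ) ≤ gromovProd S x z w := (Nat.floor_le ht).trans (min_le_left _ _)
  have hi2 : (i : ℝ) ≤ gromovProd S z y w := (Nat.floor_le ht).trans (min_le_right _ _)
  have hix : i ≤ wordDist S w x := by exact_mod_cast hi1.trans (hS.gromovProd_le_left x z w)
  have hiy : i ≤ wordDist S w y := by exact_mod_cast hi2.trans (hS.gromovProd_le_right z y w)
  have hαx : (wordDist S x (α i) : ℝ) = wordDist S w x - i := by
    rw [hS.wordDist_comm, hα.wordDist_right hix, Nat.cast_sub hix]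
  have hβy : (wordDist S (β i) y : ℝ) = wordDist S w y - i := by
    rw [hβ.wordDist_right hiy, Nat.cast_sub hiy]
  have := hhyp.wordDist_le_of_le_gromovProd hS hα hγ hi1
  have := hhyp.wordDist_le_of_le_gromovProd hS hγ hβ hi2
  have := hS.wordDist_triangle_real x (α i) y
  have := hS.wordDist_triangle_real (α i) (γ i) y
  have := hS.wordDist_triangle_real (γ i) (β i) y
  have := hS.wordDist_comm_real x w
  have := hS.wordDist_comm_real y w
  have := Nat.lt_floor_add_one t
  unfold gromovProd
  linarith

theorem slim {f g₁ g₂ : ℕ → H} {x y w : H} (hf : IsGeodesicSegment S f x y)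
    (hg₁ : IsGeodesicSegment S g₁ x w) (hg₂ : IsGeodesicSegment S g₂ w y) {i : ℕ}
    (hi : i ≤ wordDist S x y) :
    (∃ j ≤ wordDist S x w, (wordDist S (f i) (g₁ j) : ℝ) ≤ δ) ∨
      ∃ j ≤ wordDist S w y, (wordDist S (f i) (g₂ j) : ℝ) ≤ δ := by
  by_cases hix : (i : ℝ) ≤ gromovProd S y w x
  · exact Or.inl ⟨i, by exact_mod_cast hix.trans (hS.gromovProd_le_right y w x),
      hhyp.wordDist_le_of_le_gromovProd hS hf hg₁ hix⟩
  -- Otherwise `f i` is close to the point of `[w,y]` at the same distance from `y`.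
  set i' := wordDist S x y - i
  have hsum := hS.gromovProd_add_gromovProd x y w
  have hi' : (i' : ℝ) ≤ gromovProd S x w y := by
    simp only [i', Nat.cast_sub hi]
    linarith
  have hwy : wordDist S y w = wordDist S w y := hS.wordDist_comm y w
  have hi'w : i' ≤ wordDist S w y := by
    rw [← hwy]
    exact_mod_cast hi'.trans (hS.gromovProd_le_right x w y)
  refine Or.inr ⟨wordDist S w y - i', by omega, ?_⟩
  have := hhyp.wordDist_le_of_le_gromovProd hS (hf.reverse hS) (hg₂.reverse hS) hi'
  simpa [hwy, i', Nat.sub_sub_self hi] using this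

end WordHyperbolic

theorem le_of_forall_nat_mul_le_add {c A D : ℝ} (h : ∀ n : ℕ, n * c ≤ A + n * D) : c ≤ D := by
  by_contra! hDc
  obtain ⟨n, hn⟩ := exists_nat_gt (A / (c - D))
  rw [div_lt_iff₀ (by linarith)] at hn
  linarith [h n]

theorem IsSymmetricGeneratingSet.wordLength_pow_le_conj (hS : IsSymmetricGeneratingSet S)
    (a g : H) (n : ℕ) :
    wordLength S (a ^ n) ≤ 2 * wordLength S g + n * wordLength S (g⁻¹ * a * g) := by
  have ha : a ^ n = g * (g⁻¹ * a * g) ^ n * g⁻¹ := by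
    rw [← conj_pow]
    group
  have := hS.wordLength_mul_le (g * (g⁻¹ * a * g) ^ n) g⁻¹
  have := hS.wordLength_mul_le g ((g⁻¹ * a * g) ^ n)
  have := hS.wordLength_pow_le (g⁻¹ * a * g) n
  have := hS.wordLength_inv g
  rw [ha]
  omega

namespace WordHyperbolic

variable {δ : ℝ} (hhyp : WordHyperbolic S δ) (hS : IsSymmetricGeneratingSet S)
include hhyp hS

theorem gromovProd_pow_le {a : H} (ha : 2 * (gromovProd S a⁻¹ a 1 + δ + 1) < wordLength S a)
    (j : ℕ) : gromovProd S 1 (a ^ (j + 1)) (a ^ j) ≤ gromovProd S a⁻¹ a 1 + δ + 1 := by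
  induction j with
  | zero =>
    rw [zero_add, pow_one, pow_zero, gromovProd, hS.wordDist_comm_real a 1, wordDist_self,
      Nat.cast_zero]
    linarith [hS.gromovProd_nonneg a⁻¹ a 1, hhyp.nonneg hS]
  | succ m ih =>
    -- By induction `(a ^ m, 1)_{a ^ (m + 1)}` is large, so the four point condition at
    -- `a ^ (m + 1)` forces `(1, a ^ (m + 2))_{a ^ (m + 1)}` to be small.
    have hfour := hhyp.min_gromovProd_le hS (a ^ (m + 1)) (a ^ m) (a ^ (m + 2)) 1
    have hp : gromovProd S (a ^ m) (a ^ (m + 2)) (a ^ (m + 1)) = gromovProd S a⁻¹ a 1 := by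
      simpa [pow_succ, mul_assoc] using gromovProd_mul_left (S := S) (a ^ (m + 1)) a⁻¹ a 1
    have hsum := hS.gromovProd_add_gromovProd (a ^ m) (a ^ (m + 1)) 1
    rw [hS.gromovProd_comm (a ^ (m + 1)), pow_succ a m, wordDist_self_mul, ← pow_succ] at hsum
    rw [hp] at hfour
    have hmin : min (gromovProd S (a ^ m) 1 (a ^ (m + 1)))
        (gromovProd S 1 (a ^ (m + 2)) (a ^ (m + 1))) ≤ gromovProd S a⁻¹ a 1 + δ + 1 := by
      linarith
    rcases min_le_iff.mp hmin with h | h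
    · linarith
    · exact h

theorem nat_mul_le_wordLength_pow (a : H) (n : ℕ) :
    n * (wordLength S a - 2 * (gromovProd S a⁻¹ a 1 + δ + 1)) ≤ (wordLength S (a ^ n) : ℝ) := by
  by_cases ha : 2 * (gromovProd S a⁻¹ a 1 + δ + 1) < wordLength S a
  · induction n with
    | zero => simp
    | succ n ih =>
      have hstep := hhyp.gromovProd_pow_le hS ha n
      rw [gromovProd, wordDist_one_left, wordDist_one_left, hS.wordDist_comm, pow_succ,
        wordDist_self_mul, ← pow_succ] at hstep
      push_cast
      linarith
  · have : (0 : ℝ) ≤ wordLength S (a ^ n) := Nat.cast_nonneg _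
    nlinarith [(Nat.cast_nonneg n : (0 : ℝ) ≤ n)]

theorem almostConjMin_of_gromovProd_le {a : H} {X : ℝ} (ha : gromovProd S a⁻¹ a 1 ≤ X) :
    AlmostConjMin S (2 * X + 2 * δ + 2) a := by
  intro g
  have := le_of_forall_nat_mul_le_add (A := 2 * (wordLength S g : ℝ))
    (D := wordLength S (g⁻¹ * a * g)) fun n =>
    (hhyp.nat_mul_le_wordLength_pow hS a n).trans
      (by exact_mod_cast hS.wordLength_pow_le_conj a g n)
  linarith

theorem exists_wordLength_conj_le (h : H) {i : ℕ} (hi : (i : ℝ) ≤ gromovProd S h⁻¹ h 1)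
    (hin : 2 * i ≤ wordLength S h) :
    ∃ g, (wordLength S (g⁻¹ * h * g) : ℝ) ≤ wordLength S h - 2 * i + δ := by
  obtain ⟨γ, hγ⟩ := hS.exists_isGeodesicSegment 1 h
  have hn : wordDist S 1 h = wordLength S h := wordDist_one_left h
  have hγh := hγ.mul_left h
  rw [mul_one] at hγh
  -- The triangle `1, h, h * h` is `δ`-thin at `h`, and `(1, h * h)_h = (h⁻¹, h)_1`.
  have hthin := hhyp.wordDist_le_of_le_gromovProd hS (hγ.reverse hS) hγh (i := i)
    (by simpa using hi.trans_eq (gromovProd_mul_left (S := S) h h⁻¹ h 1).symm)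
  refine ⟨γ i, ?_⟩
  have hconj : wordLength S ((γ i)⁻¹ * h * γ i) = wordDist S (γ i) (h * γ i) := by
    rw [wordDist, mul_assoc]
  have hγi : wordDist S (γ i) (γ (wordDist S 1 h - i)) = wordLength S h - 2 * i := by
    rw [hγ.isDiscreteGeodesic _ _ (by omega) (by omega), hn]
    omega
  have := hS.wordDist_triangle_real (γ i) (γ (wordDist S 1 h - i)) (h * γ i)
  rw [hconj]
  rw [hγi, Nat.cast_sub hin] at this
  push_cast at this
  linarith

theorem gromovProd_le_of_almostConjMin {κ : ℝ} {h : H} (hh : AlmostConjMin S κ h) :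
    gromovProd S h⁻¹ h 1 ≤ δ + κ + 1 := by
  set P := gromovProd S h⁻¹ h 1
  have hP : 0 ≤ P := hS.gromovProd_nonneg _ _ _
  set i := min ⌊P⌋₊ (wordLength S h / 2)
  obtain ⟨g, hg⟩ := hhyp.exists_wordLength_conj_le hS h (i := i)
    ((Nat.cast_le.2 (min_le_left _ _)).trans (Nat.floor_le hP)) (by omega)
  have hi : 2 * (i : ℝ) ≤ δ + κ := by linarith [hh g]
  rcases le_total ⌊P⌋₊ (wordLength S h / 2) with hc | hc
  · have hPi : P < i + 1 := by
      rw [show i = ⌊P⌋₊ from min_eq_left hc]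
      exact Nat.lt_floor_add_one P
    linarith [(Nat.cast_nonneg i : (0 : ℝ) ≤ i)]
  · have : wordLength S h ≤ 2 * i + 1 := by omega
    have : (wordLength S h : ℝ) ≤ 2 * i + 1 := by exact_mod_cast this
    have : P ≤ wordLength S h := (hS.gromovProd_le_right _ _ _).trans_eq (by rw [wordDist_one_left])
    linarith

end WordHyperbolic

theorem WordHyperbolic.exists_wordDist_le_of_isCoarsePath {δ : ℝ} (hhyp : WordHyperbolic S δ)
    (hS : IsSymmetricGeneratingSet S) {B : ℝ} (hB : 0 ≤ B) (k : ℕ) {N : ℕ} (hN : N ≤ 2 ^ k)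
    {z f : ℕ → H} (hz : IsCoarsePath S B z N) (hf : IsGeodesicSegment S f (z 0) (z N)) {i : ℕ}
    (hi : i ≤ wordDist S (z 0) (z N)) :
    ∃ j ≤ N, (wordDist S (z j) (f i) : ℝ) ≤ B + k * δ := by
  induction k generalizing N z f i with
  | zero =>
    refine ⟨0, Nat.zero_le N, ?_⟩
    have hzN : (wordDist S (z 0) (z N) : ℝ) ≤ B := by
      rcases Nat.le_one_iff_eq_zero_or_eq_one.mp hN with rfl | rfl
      · simpa using hB
      · exact hz 0 one_pos
    rw [hf.wordDist_left hi]
    have : (i : ℝ) ≤ wordDist S (z 0) (z N) := by exact_mod_cast hi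
    simp only [CharP.cast_eq_zero, zero_mul, add_zero]
    linarith
  | succ k ih =>
    -- Split the path at its midpoint `z h` and use the slim triangle `z 0, z h, z N`.
    set h := N / 2
    have hhN : h + (N - h) = N := by omega
    obtain ⟨g₁, hg₁⟩ := hS.exists_isGeodesicSegment (z 0) (z h)
    obtain ⟨g₂, hg₂⟩ := hS.exists_isGeodesicSegment (z h) (z N)
    have hg₂' : IsGeodesicSegment S g₂ (z (h + 0)) (z (h + (N - h))) := by rwa [hhN]
    rcases hhyp.slim hS hf hg₁ hg₂ hi with ⟨j', hj', hd⟩ | ⟨j', hj', hd⟩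
    · obtain ⟨j, hj, hjd⟩ := ih (by rw [pow_succ] at hN; omega) (hz.of_le (by omega)) hg₁ hj'
      refine ⟨j, by omega, ?_⟩
      have := hS.wordDist_triangle_real (z j) (g₁ j') (f i)
      have := hS.wordDist_comm_real (g₁ j') (f i)
      push_cast
      linarith
    · obtain ⟨j, hj, hjd⟩ := ih (by rw [pow_succ] at hN; omega) (hz.shift h) hg₂'
        (i := j') (by rwa [hhN])
      refine ⟨h + j, by omega, ?_⟩
      have := hS.wordDist_triangle_real (z (h + j)) (g₂ j') (f i)
      have := hS.wordDist_comm_real (g₂ j') (f i)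
      push_cast
      linarith

theorem Nat.log_two_le_three_mul_sqrt (N : ℕ) : (Nat.log 2 N : ℝ) ≤ 3 * √N := by
  have hlog : Real.log N ≤ 2 * √N := by
    have := Real.log_le_rpow_div (Nat.cast_nonneg N) (ε := 1 / 2) (by norm_num)
    rw [Real.sqrt_eq_rpow]
    linarith
  have hlog2 := Real.log_two_gt_d9
  calc (Nat.log 2 N : ℝ) ≤ Real.logb 2 N := by exact_mod_cast Real.natLog_le_logb N 2
    _ = Real.log N / Real.log 2 := rfl
    _ ≤ 3 * √N := by
      rw [div_le_iff₀ (by linarith)]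
      nlinarith [Real.sqrt_nonneg N]

/-- The constant comes from `log₂ N ≤ 3 √N` and `3 δ √N ≤ N / (2 P) + 9 δ² P / 2`. -/
theorem le_of_le_add_mul_log {ρ A δ P Q : ℝ} {N : ℕ} (hδ : 0 ≤ δ) (hP : 0 < P)
    (hρ : ρ ≤ A + δ * (Nat.log 2 N + 1)) (hN : N ≤ P * ρ + Q) :
    ρ ≤ 2 * (A + δ) + Q / P + 9 * δ ^ 2 * P := by
  have hsq : √N ^ 2 = N := Real.sq_sqrt (Nat.cast_nonneg N)
  have hlog : δ * Nat.log 2 N ≤ 3 * δ * √N := by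
    nlinarith [Nat.log_two_le_three_mul_sqrt N]
  have hamgm : P * (3 * δ * √N) ≤ (N + 9 * δ ^ 2 * P ^ 2) / 2 := by
    nlinarith [sq_nonneg (√N - 3 * δ * P)]
  have hQP : Q = P * (Q / P) := by field_simp
  nlinarith

def IsQuasiGeodesicPath (S : Set H) (K C : ℝ) (y : ℕ → H) (m : ℕ) : Prop :=
  ∀ j j', j ≤ j' → j' ≤ m →
    ((j' : ℝ) - j) / K - C ≤ wordDist S (y j) (y j') ∧
      (wordDist S (y j) (y j') : ℝ) ≤ K * ((j' : ℝ) - j) + C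

namespace IsQuasiGeodesicPath

variable {K C : ℝ} {y : ℕ → H} {m : ℕ}

theorem isCoarsePath (hy : IsQuasiGeodesicPath S K C y m) : IsCoarsePath S (K + C) y m :=
  fun j hj => by simpa using (hy j (j + 1) (by omega) hj).2

theorem sub_le (hy : IsQuasiGeodesicPath S K C y m) (hK : 0 < K) {a b : ℕ} (hab : a ≤ b)
    (hb : b ≤ m) : (b : ℝ) - a ≤ K * (wordDist S (y a) (y b) + C) := by
  have := (hy a b hab hb).1
  rw [div_sub' hK.ne', div_le_iff₀ hK] at this
  linarith

theorem wordDist_le_of_le_of_le (hy : IsQuasiGeodesicPath S K C y m) (hK : 0 < K) {a i b : ℕ}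
    (hai : a ≤ i) (hib : i ≤ b) (hb : b ≤ m) :
    (wordDist S (y a) (y i) : ℝ) ≤ K * (K * (wordDist S (y a) (y b) + C)) + C := by
  have hab := hy.sub_le hK (hai.trans hib) hb
  have : (i : ℝ) ≤ b := by exact_mod_cast hib
  have : K * ((i : ℝ) - a) ≤ K * (K * (wordDist S (y a) (y b) + C)) :=
    mul_le_mul_of_nonneg_left (by linarith) hK.le
  linarith [(hy a i hai (hib.trans hb)).2]

theorem exists_subpath (hy : IsQuasiGeodesicPath S K C y m) (hS : IsSymmetricGeneratingSet S)
    (hK : 0 < K) {a b : ℕ} (ha : a ≤ m) (hb : b ≤ m) :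
    ∃ w L, w 0 = y a ∧ w L = y b ∧ IsCoarsePath S (K + C) w L ∧
      (∀ j ≤ L, ∃ s ≤ m, w j = y s) ∧ (L : ℝ) ≤ K * (wordDist S (y a) (y b) + C) := by
  wlog hab : a ≤ b generalizing a b
  · obtain ⟨w, L, hw0, hwL, hw, hwy, hL⟩ := this hb ha (by omega)
    refine ⟨fun j => w (L - j), L, by simpa using hwL, by simpa using hw0, hw.reverse hS,
      fun j _ => hwy (L - j) (by omega), by rwa [hS.wordDist_comm]⟩
  refine ⟨fun j => y (a + j), b - a, by simp, by simp [Nat.add_sub_cancel' hab],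
    hy.isCoarsePath.shift a |>.of_le (by omega), fun j hj => ⟨a + j, by omega, rfl⟩, ?_⟩
  rw [Nat.cast_sub hab]
  exact hy.sub_le hK hab hb

theorem exists_detour (hy : IsQuasiGeodesicPath S K C y m) (hS : IsSymmetricGeneratingSet S)
    (hK : 1 ≤ K) (hC : 0 ≤ C) {x p₁ p₂ : H} {s₁ s₂ ρ : ℕ} (hs₁ : s₁ ≤ m) (hs₂ : s₂ ≤ m)
    (hfar : ∀ s ≤ m, ρ ≤ wordDist S x (y s))
    (h₁ : wordDist S p₁ (y s₁) + ρ ≤ wordDist S x p₁)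
    (h₂ : wordDist S (y s₂) p₂ + ρ ≤ wordDist S x p₂) :
    ∃ z N, z 0 = p₁ ∧ z N = p₂ ∧ IsCoarsePath S (K + C) z N ∧
      (∀ j ≤ N, ρ ≤ wordDist S x (z j)) ∧
      (N : ℝ) ≤ wordDist S p₁ (y s₁) + K * (wordDist S (y s₁) (y s₂) + C) +
        wordDist S (y s₂) p₂ := by
  obtain ⟨c₁, hc₁⟩ := hS.exists_isGeodesicSegment p₁ (y s₁)
  obtain ⟨w, L, hw0, hwL, hw, hwy, hL⟩ := hy.exists_subpath hS (by linarith) hs₁ hs₂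
  obtain ⟨c₂, hc₂⟩ := hS.exists_isGeodesicSegment (y s₂) p₂
  have hKC : 1 ≤ K + C := by linarith
  have hj₁ : c₁ (wordDist S p₁ (y s₁)) = pathConcat w L c₂ 0 := by
    rw [pathConcat_zero, hc₁.last, hw0]
  have hj₂ : w L = c₂ 0 := by rw [hwL, hc₂.zero]
  refine ⟨pathConcat c₁ _ (pathConcat w L c₂), _ + (L + _), by simp [hc₁.zero], ?_,
    (hc₁.isCoarsePath hKC).pathConcat (hw.pathConcat (hc₂.isCoarsePath hKC) hj₂) hj₁,
    fun j hj => forall_pathConcat (P := fun p => ρ ≤ wordDist S x p) ?_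
      (fun j hj => forall_pathConcat (P := fun p => ρ ≤ wordDist S x p) ?_ ?_ hj) hj, ?_⟩
  · rw [pathConcat_add hj₁, pathConcat_add hj₂, hc₂.last]
  · intro j hj
    have := hS.wordDist_triangle x (c₁ j) p₁
    rw [hS.wordDist_comm (c₁ j), hc₁.wordDist_left hj] at this
    omega
  · intro j hj
    obtain ⟨s, hs, hws⟩ := hwy j hj
    exact hws ▸ hfar s hs
  · intro j hj
    have := hS.wordDist_triangle x (c₂ j) p₂
    rw [hc₂.wordDist_right hj] at this
    omega
  · push_cast
    linarith

end IsQuasiGeodesicPath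

theorem Nat.exists_maximin (D : ℕ → ℕ → ℕ) (n m : ℕ) :
    ∃ t₀ ≤ n, ∃ ρ : ℕ, (∀ s ≤ m, ρ ≤ D t₀ s) ∧ ∀ t ≤ n, ∃ s ≤ m, D t s ≤ ρ := by
  have hm : (Finset.range (m + 1)).Nonempty := ⟨0, by simp⟩
  obtain ⟨t₀, ht₀, hmax⟩ := Finset.exists_max_image (Finset.range (n + 1))
    (fun t => (Finset.range (m + 1)).inf' hm (D t)) ⟨0, by simp⟩
  refine ⟨t₀, by simpa [Nat.lt_succ_iff] using ht₀, (Finset.range (m + 1)).inf' hm (D t₀),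
    fun s hs => Finset.inf'_le (D t₀) (by simpa [Nat.lt_succ_iff] using hs), fun t ht => ?_⟩
  obtain ⟨s, hs, hst⟩ := Finset.exists_mem_eq_inf' hm (D t)
  exact ⟨s, by simpa [Nat.lt_succ_iff] using hs,
    hst ▸ hmax t (by simpa [Nat.lt_succ_iff] using ht)⟩

theorem exists_wordDist_add_le_wordDist {y : ℕ → H} {m : ℕ} {x p : H} {ρ : ℕ}
    (hfar : ∀ s ≤ m, ρ ≤ wordDist S x (y s)) (hcover : ∃ s ≤ m, wordDist S p (y s) ≤ ρ)
    (hp : 2 * ρ ≤ wordDist S x p ∨ ∃ s ≤ m, p = y s) :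
    ∃ s ≤ m, wordDist S p (y s) ≤ ρ ∧ wordDist S p (y s) + ρ ≤ wordDist S x p := by
  rcases hp with hp | ⟨s, hs, rfl⟩
  · obtain ⟨s, hs, hd⟩ := hcover
    exact ⟨s, hs, hd, by omega⟩
  · exact ⟨s, hs, by simp, by simpa using hfar s hs⟩

theorem IsGeodesicSegment.exists_window (hS : IsSymmetricGeneratingSet S) {y Γ : ℕ → H} {m : ℕ}
    (hΓ : IsGeodesicSegment S Γ (y 0) (y m)) {t₀ ρ : ℕ} (ht₀ : t₀ ≤ wordDist S (y 0) (y m))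
    (hfar : ∀ s ≤ m, ρ ≤ wordDist S (Γ t₀) (y s))
    (hcover : ∀ t ≤ wordDist S (y 0) (y m), ∃ s ≤ m, wordDist S (Γ t) (y s) ≤ ρ) :
    ∃ tl tr s₁ s₂, tl ≤ t₀ ∧ t₀ ≤ tr ∧ tr ≤ wordDist S (y 0) (y m) ∧ tr - tl ≤ 4 * ρ ∧
      s₁ ≤ m ∧ wordDist S (Γ tl) (y s₁) ≤ ρ ∧
      wordDist S (Γ tl) (y s₁) + ρ ≤ wordDist S (Γ t₀) (Γ tl) ∧
      s₂ ≤ m ∧ wordDist S (y s₂) (Γ tr) ≤ ρ ∧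
      wordDist S (y s₂) (Γ tr) + ρ ≤ wordDist S (Γ t₀) (Γ tr) := by
  set n := wordDist S (y 0) (y m)
  set tl := t₀ - 2 * ρ
  set tr := min (t₀ + 2 * ρ) n
  have htl : tl ≤ t₀ := Nat.sub_le _ _
  have htr : t₀ ≤ tr := le_min (by omega) ht₀
  have htrn : tr ≤ n := min_le_right _ _
  obtain ⟨s₁, hs₁, hd₁, hf₁⟩ := exists_wordDist_add_le_wordDist hfar (hcover tl (by omega)) (by
    by_cases h : 2 * ρ ≤ t₀
    · left
      rw [hS.wordDist_comm, hΓ.isDiscreteGeodesic tl t₀ htl ht₀]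
      omega
    · exact Or.inr ⟨0, Nat.zero_le m, by rw [show tl = 0 by omega, hΓ.zero]⟩)
  obtain ⟨s₂, hs₂, hd₂, hf₂⟩ := exists_wordDist_add_le_wordDist hfar (hcover tr htrn) (by
    by_cases h : t₀ + 2 * ρ ≤ n
    · left
      rw [hΓ.isDiscreteGeodesic t₀ tr htr htrn]
      omega
    · exact Or.inr ⟨m, le_rfl, by rw [show tr = n by omega, hΓ.last]⟩)
  rw [hS.wordDist_comm] at hd₂ hf₂
  exact ⟨tl, tr, s₁, s₂, htl, htr, htrn, by omega, hs₁, hd₁, hf₁, hs₂, hd₂, hf₂⟩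

/-- The detour from `Γ (t₀ - 2ρ)` to `Γ (t₀ + 2ρ)` through `y` stays outside the `ρ`-ball
about `Γ t₀` and has length `N` linear in `ρ`; divergence of geodesics then bounds `ρ` by
`log₂ N`. -/
theorem WordHyperbolic.exists_le_log_of_farthest {δ K C : ℝ} (hhyp : WordHyperbolic S δ)
    (hS : IsSymmetricGeneratingSet S) (hK : 1 ≤ K) (hC : 0 ≤ C) {y Γ : ℕ → H} {m : ℕ}
    (hy : IsQuasiGeodesicPath S K C y m) (hΓ : IsGeodesicSegment S Γ (y 0) (y m)) {t₀ ρ : ℕ}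
    (ht₀ : t₀ ≤ wordDist S (y 0) (y m)) (hfar : ∀ s ≤ m, ρ ≤ wordDist S (Γ t₀) (y s))
    (hcover : ∀ t ≤ wordDist S (y 0) (y m), ∃ s ≤ m, wordDist S (Γ t) (y s) ≤ ρ) :
    ∃ N : ℕ, (N : ℝ) ≤ (6 * K + 2) * ρ + K * C ∧ (ρ : ℝ) ≤ K + C + δ * (Nat.log 2 N + 1) := by
  obtain ⟨tl, tr, s₁, s₂, htl, htr, htrn, hwidth, hs₁, hd₁, hf₁, hs₂, hd₂, hf₂⟩ :=
    hΓ.exists_window hS ht₀ hfar hcover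
  obtain ⟨z, N, hz0, hzN, hz, hzfar, hN⟩ := hy.exists_detour hS hK hC hs₁ hs₂ hfar hf₁ hf₂
  have hwindow : wordDist S (Γ tl) (Γ tr) = tr - tl := hΓ.isDiscreteGeodesic tl tr (by omega) htrn
  refine ⟨N, ?_, ?_⟩
  · have h₁₂ : wordDist S (y s₁) (y s₂) ≤ 6 * ρ := by
      have := hS.wordDist_triangle (y s₁) (Γ tl) (y s₂)
      have := hS.wordDist_triangle (Γ tl) (Γ tr) (y s₂)
      have := hS.wordDist_comm (y s₁) (Γ tl)
      have := hS.wordDist_comm (Γ tr) (y s₂)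
      omega
    have h₁₂' : K * (wordDist S (y s₁) (y s₂) : ℝ) ≤ K * (6 * ρ) := by
      gcongr
      exact_mod_cast h₁₂
    have : (wordDist S (Γ tl) (y s₁) : ℝ) ≤ ρ := by exact_mod_cast hd₁
    have : (wordDist S (y s₂) (Γ tr) : ℝ) ≤ ρ := by exact_mod_cast hd₂
    linarith
  · have hgeo : IsGeodesicSegment S (fun j => Γ (tl + j)) (z 0) (z N) := by
      rw [hz0, hzN]
      exact hΓ.shift (by omega) htrn
    obtain ⟨j, hj, hjd⟩ := hhyp.exists_wordDist_le_of_isCoarsePath hS (by linarith)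
      (Nat.log 2 N + 1) (Nat.lt_pow_succ_log_self one_lt_two N).le hz hgeo (i := t₀ - tl)
      (by rw [hz0, hzN, hwindow]; omega)
    rw [Nat.add_sub_cancel' htl, hS.wordDist_comm] at hjd
    have : (ρ : ℝ) ≤ wordDist S (Γ t₀) (z j) := by exact_mod_cast hzfar j hj
    push_cast at hjd
    linarith

noncomputable def morseRadius (K C δ : ℝ) : ℝ :=
  2 * (K + C + δ) + K * C / (6 * K + 2) + 9 * δ ^ 2 * (6 * K + 2)

theorem WordHyperbolic.exists_wordDist_le_morseRadius {δ K C : ℝ} (hhyp : WordHyperbolic S δ)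
    (hS : IsSymmetricGeneratingSet S) (hK : 1 ≤ K) (hC : 0 ≤ C) {y Γ : ℕ → H}
    {m : ℕ} (hy : IsQuasiGeodesicPath S K C y m) (hΓ : IsGeodesicSegment S Γ (y 0) (y m)) {t : ℕ}
    (ht : t ≤ wordDist S (y 0) (y m)) :
    ∃ s ≤ m, (wordDist S (Γ t) (y s) : ℝ) ≤ morseRadius K C δ := by
  obtain ⟨t₀, ht₀, ρ, hfar, hcover⟩ :=
    Nat.exists_maximin (fun t s => wordDist S (Γ t) (y s)) (wordDist S (y 0) (y m)) m
  obtain ⟨N, hN, hρ⟩ := hhyp.exists_le_log_of_farthest hS hK hC hy hΓ ht₀ hfar hcover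
  obtain ⟨s, hs, hd⟩ := hcover t ht
  refine ⟨s, hs, (Nat.cast_le.2 hd).trans ?_⟩
  have := le_of_le_add_mul_log (hhyp.nonneg hS) (by linarith) hρ hN
  rw [morseRadius]
  linarith

theorem Nat.exists_adjacent_of_forall_or {A B : ℕ → Prop} {n : ℕ} (hAB : ∀ ν ≤ n, A ν ∨ B ν)
    (hA : A 0) (hB : B n) : ∃ ν ν', ν ≤ ν' ∧ ν' ≤ ν + 1 ∧ ν' ≤ n ∧ A ν ∧ B ν' := by
  classical
  set ν := Nat.findGreatest A n
  have hν : A ν := Nat.findGreatest_spec (Nat.zero_le n) hA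
  rcases (Nat.findGreatest_le n : ν ≤ n).eq_or_lt with hνn | hνn
  · exact ⟨ν, n, hνn.le, by omega, le_rfl, hν, hB⟩
  · refine ⟨ν, ν + 1, by omega, le_rfl, hνn, hν, ?_⟩
    exact (hAB (ν + 1) hνn).resolve_left (Nat.findGreatest_is_greatest (Nat.lt_succ_self ν) hνn)

noncomputable def morseConst (K C δ : ℝ) : ℝ :=
  K ^ 2 * (2 * morseRadius K C δ + 1 + C) + C + morseRadius K C δ

theorem morseConst_nonneg {K C δ : ℝ} (hK : 0 ≤ K) (hC : 0 ≤ C) (hδ : 0 ≤ δ) :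
    0 ≤ morseConst K C δ := by
  unfold morseConst morseRadius
  positivity

theorem WordHyperbolic.gromovProd_le_morseConst {δ K C : ℝ} (hhyp : WordHyperbolic S δ)
    (hS : IsSymmetricGeneratingSet S) (hK : 1 ≤ K) (hC : 0 ≤ C) {y : ℕ → H}
    {m : ℕ} (hy : IsQuasiGeodesicPath S K C y m) {i : ℕ} (hi : i ≤ m) :
    gromovProd S (y 0) (y m) (y i) ≤ morseConst K C δ := by
  obtain ⟨Γ, hΓ⟩ := hS.exists_isGeodesicSegment (y 0) (y m)
  set ρ := morseRadius K C δ
  have hnear := fun t (ht : t ≤ _) => hhyp.exists_wordDist_le_morseRadius hS hK hC hy hΓ ht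
  have hρ : 0 ≤ ρ := by
    obtain ⟨s, -, hs⟩ := hnear 0 (Nat.zero_le _)
    exact (Nat.cast_nonneg _).trans hs
  -- Walking along `Γ`, pass from points near `y` before `i` to points near `y` after `i`.
  obtain ⟨ν, ν', hνν', hν'ν, hν'n, ⟨s₁, hs₁, hd₁⟩, ⟨s₂, hs₂, hs₂m, hd₂⟩⟩ :=
    Nat.exists_adjacent_of_forall_or
      (A := fun ν => ∃ s ≤ i, (wordDist S (Γ ν) (y s) : ℝ) ≤ ρ)
      (B := fun ν => ∃ s, i ≤ s ∧ s ≤ m ∧ (wordDist S (Γ ν) (y s) : ℝ) ≤ ρ)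
      (fun ν hν => by
        obtain ⟨s, hs, hd⟩ := hnear ν hν
        rcases le_total s i with h | h
        exacts [Or.inl ⟨s, h, hd⟩, Or.inr ⟨s, h, hs, hd⟩])
      ⟨0, Nat.zero_le i, by simpa [hΓ.zero] using hρ⟩ ⟨m, hi, le_rfl, by simpa [hΓ.last] using hρ⟩
  have hs₁₂ : (wordDist S (y s₁) (y s₂) : ℝ) ≤ 2 * ρ + 1 := by
    have hΓνν' : (wordDist S (Γ ν) (Γ ν') : ℝ) ≤ 1 := by
      rw [hΓ.isDiscreteGeodesic ν ν' hνν' hν'n]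
      exact_mod_cast (by omega : ν' - ν ≤ 1)
    have := hS.wordDist_triangle_real (y s₁) (Γ ν) (y s₂)
    have := hS.wordDist_triangle_real (Γ ν) (Γ ν') (y s₂)
    have := hS.wordDist_comm_real (y s₁) (Γ ν)
    linarith
  have hyi : (wordDist S (y i) (y s₁) : ℝ) ≤ K * (K * (2 * ρ + 1 + C)) + C := by
    have hK0 : 0 < K := by linarith
    rw [hS.wordDist_comm_real]
    have : K * (wordDist S (y s₁) (y s₂) + C) ≤ K * (2 * ρ + 1 + C) := by gcongr
    have : K * (K * (wordDist S (y s₁) (y s₂) + C)) ≤ K * (K * (2 * ρ + 1 + C)) := by gcongr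
    linarith [hy.wordDist_le_of_le_of_le hK0 hs₁ hs₂ hs₂m]
  calc gromovProd S (y 0) (y m) (y i) ≤ wordDist S (y i) (Γ ν) :=
        hΓ.gromovProd_le_wordDist hS _ (by omega)
    _ ≤ wordDist S (y i) (y s₁) + wordDist S (y s₁) (Γ ν) := hS.wordDist_triangle_real _ _ _
    _ ≤ morseConst K C δ := by
      rw [hS.wordDist_comm_real (y s₁), morseConst]
      nlinarith

def IsQuasiIsometricEmbedding {G : Type*} [Group G] (S : Set H) (T : Set G) (K C : ℝ)
    (f : H → G) : Prop :=
  ∀ a b : H, (1 / K) * (wordDist S a b : ℝ) - C ≤ (wordDist T (f a) (f b) : ℝ) ∧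
    (wordDist T (f a) (f b) : ℝ) ≤ K * (wordDist S a b : ℝ) + C

theorem IsGeodesicSegment.isQuasiGeodesicPath_comp {G : Type*} [Group G] {T : Set G} {K C : ℝ}
    {f : H → G} {σ : ℕ → H} {x y : H} (hσ : IsGeodesicSegment S σ x y)
    (hf : IsQuasiIsometricEmbedding S T K C f) :
    IsQuasiGeodesicPath T K C (f ∘ σ) (wordDist S x y) := fun j j' hjj' hj' => by
  have := hf (σ j) (σ j')
  rwa [hσ.isDiscreteGeodesic j j' hjj' hj', Nat.cast_sub hjj', one_div_mul_eq_div] at this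

theorem WordHyperbolic.gromovProd_map_le {G : Type*} [Group G] {T : Set G} {δ δ' K C : ℝ}
    (hH : WordHyperbolic S δ) (hS : IsSymmetricGeneratingSet S) (hG : WordHyperbolic T δ')
    (hT : IsSymmetricGeneratingSet T) (hK : 1 ≤ K) (hC : 0 ≤ C) {f : H → G}
    (hf : IsQuasiIsometricEmbedding S T K C f) (x y w : H) :
    gromovProd T (f x) (f y) (f w) ≤ K * (gromovProd S x y w + δ + 1) + C + morseConst K C δ' := by
  obtain ⟨σ, hσ⟩ := hS.exists_isGeodesicSegment x y
  obtain ⟨i, hi, hwi⟩ := hH.exists_wordDist_le_gromovProd hS hσ w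
  have hmorse := hG.gromovProd_le_morseConst hT hK hC (hσ.isQuasiGeodesicPath_comp hf) hi
  simp only [Function.comp, hσ.zero, hσ.last] at hmorse
  have := hT.gromovProd_le_wordDist_add (f x) (f y) (f w) (f (σ i))
  have := (hf w (σ i)).2
  have : K * (wordDist S w (σ i) : ℝ) ≤ K * (gromovProd S x y w + δ + 1) := by gcongr
  linarith

end

theorem stmt9_general {H : Type*} [Group H] (S : Set H) (δ : ℝ)
    (hSsym : ∀ s ∈ S, s⁻¹ ∈ S) (hSgen : Subgroup.closure S = ⊤)
    (hhyp : WordHyperbolic S δ)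
    (K C κ : ℝ) (hK : 1 ≤ K) (hC : 0 ≤ C) (hκ : 0 ≤ κ) :
    ∃ κ' : ℝ, 0 ≤ κ' ∧
      ∀ ψ : H ≃* H,
        (∀ a b : H,
          (1 / K) * (wordDist S a b : ℝ) - C ≤ (wordDist S (ψ a) (ψ b) : ℝ) ∧
          (wordDist S (ψ a) (ψ b) : ℝ) ≤ K * (wordDist S a b : ℝ) + C) →
        ∀ h : H, AlmostConjMin S κ h → AlmostConjMin S κ' (ψ h) := by
  have hS := IsSymmetricGeneratingSet.of_closure_eq_top hSsym hSgen
  have hδ := hhyp.nonneg hS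
  have hM := morseConst_nonneg (K := K) (by linarith) hC hδ
  have hKκ : 0 ≤ K * (2 * δ + κ + 2) := mul_nonneg (by linarith) (by linarith)
  refine ⟨2 * (K * (2 * δ + κ + 2) + C + morseConst K C δ) + 2 * δ + 2, by linarith,
    fun ψ hψ h hh => ?_⟩
  apply hhyp.almostConjMin_of_gromovProd_le hS
  have hψh := hhyp.gromovProd_map_le hS hhyp hS hK hC hψ h⁻¹ h 1
  rw [map_inv, map_one] at hψh
  have := hhyp.gromovProd_le_of_almostConjMin hS hh
  have : K * (gromovProd S h⁻¹ h 1 + δ + 1) ≤ K * (2 * δ + κ + 2) :=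
    mul_le_mul_of_nonneg_left (by linarith) (by linarith)
  linarith

/-- Let `H` be a group with finite symmetric generating set `S` whose
word metric is `δ`-hyperbolic, let `K ≥ 1`, `C ≥ 0`, and `κ ≥ 0`. There exists
`κ' ≥ 0`, depending only on `K`, `C`, `κ`, `H`, `S`, `δ`, such that for every group
automorphism `ψ : H → H` which is a `(K,C)`-quasi-isometry of the word metric and every
`κ`-almost conjugacy minimal `h ∈ H`, the image `ψ h` is `κ'`-almost conjugacy minimal. -/
theorem stmt9 {H : Type*} [Group H] (S : Set H) (δ : ℝ)
    (hSfin : S.Finite) (hSsym : ∀ s ∈ S, s⁻¹ ∈ S) (hSgen : Subgroup.closure S = ⊤)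
    (hδ : 0 ≤ δ) (hhyp : WordHyperbolic S δ)
    (K C κ : ℝ) (hK : 1 ≤ K) (hC : 0 ≤ C) (hκ : 0 ≤ κ) :
    ∃ κ' : ℝ, 0 ≤ κ' ∧
      ∀ ψ : H ≃* H,
        (∀ a b : H,
          (1 / K) * (wordDist S a b : ℝ) - C ≤ (wordDist S (ψ a) (ψ b) : ℝ) ∧
          (wordDist S (ψ a) (ψ b) : ℝ) ≤ K * (wordDist S a b : ℝ) + C) →
        ∀ h : H, AlmostConjMin S κ h → AlmostConjMin S κ' (ψ h) :=
  stmt9_general S δ hSsym hSgen hhyp K C κ hK hC hκ
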